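/- Let α, β ∈ ℝ, n ∈ ℕ, and let f : ℝ → ℝ be infinitely differentiable. For parameters (μ,σ) ∈ ℝ² define the operator R_{μ,σ} on smooth functions by (R_{μ,σ} g)(x) = (1−x²)·g'(x) + (σ−μ−x(μ+σ+2))·g(x). Then for all x ∈ ℝ, (R_{α,β} R_{α+1,β+1} ⋯ R_{α+n−1,β+n−1} f)(x) = Σ_{k=0}^{n} (n!/k!) · (−2)^{n−k} · f^{(k)}(x) · (1−x²)^k · P_{n−k}^{(α+k,β+k)}(x), where in the composition R_{α+n−1,β+n−1} is applied to f first and R_{α,β} last. -/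

import Mathlib

open Finset

/-- Pochhammer symbol `(a)_j = a(a+1)⋯(a+j-1)`. -/
noncomputable def poch (a : ℝ) (j : ℕ) : ℝ := ∏ i ∈ Finset.range j, (a + i)

/-- Jacobi polynomial `P_n^{(α,β)}(x)`. -/
noncomputable def jacobiP (n : ℕ) (α β : ℝ) (x : ℝ) : ℝ :=
  ∑ k ∈ Finset.range (n + 1),
    poch (α + k + 1) (n - k) * poch ((n : ℝ) + α + β + 1) k /
      (((n - k).factorial : ℝ) * (k.factorial : ℝ)) * ((x - 1) / 2) ^ k

lemma poch_zero (a : ℝ) : poch a 0 = 1 := by simp [poch]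
lemma poch_succ (a : ℝ) (j : ℕ) : poch a (j+1) = poch a j * (a + j) := by
  simp [poch, Finset.prod_range_succ]
lemma poch_succ' (a : ℝ) (j : ℕ) : poch a (j+1) = a * poch (a+1) j := by
  rw [poch, poch, Finset.prod_range_succ']
  rw [Finset.prod_congr rfl (fun i _ => by push_cast; ring : ∀ i ∈ Finset.range j, a + (↑(i+1):ℝ) = (a+1) + i)]
  ring_nf

noncomputable def jacA (n : ℕ) (α β : ℝ) (k : ℕ) : ℝ :=
  poch (α + k + 1) (n - k) * poch ((n : ℝ) + α + β + 1) k /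
      (((n - k).factorial : ℝ) * (k.factorial : ℝ))

lemma jacobiP_eq (n : ℕ) (α β x : ℝ) :
    jacobiP n α β x = ∑ k ∈ Finset.range (n+1), jacA n α β k * ((x-1)/2)^k := rfl

lemma keyB (m : ℕ) (α β : ℝ) :
    jacA m (α+1) (β+1) 0 * (α+1) = ((m:ℝ)+1) * jacA (m+1) α β 0 := by
  simp only [jacA, Nat.sub_zero, Nat.cast_zero, poch_zero, Nat.factorial]
  push_cast
  rw [show ((α+1) + 0 + 1 : ℝ) = α + 2 by ring, show (α + 0 + 1 : ℝ) = α + 1 by ring]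
  have h := poch_succ' (α+1) m
  rw [show ((α+1)+1 : ℝ) = α + 2 by ring] at h
  rw [h]
  have hm : (m.factorial : ℝ) ≠ 0 := Nat.cast_ne_zero.mpr m.factorial_ne_zero
  have hm1 : ((m:ℝ)+1) ≠ 0 := by positivity
  field_simp

lemma keyC (m : ℕ) (α β : ℝ) :
    jacA m (α+1) (β+1) m * ((m:ℝ)+α+β+2) = ((m:ℝ)+1) * jacA (m+1) α β (m+1) := by
  simp only [jacA, Nat.sub_self, show m+1-(m+1) = 0 from by omega, poch_zero, Nat.factorial]
  push_cast
  rw [show ((m:ℝ) + (α+1) + (β+1) + 1) = (m+α+β+2) + 1 by ring,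
    show ((m:ℝ)+1 + α + β + 1) = (m+α+β+2) by ring]
  have h := poch_succ' ((m:ℝ)+α+β+2) m
  rw [h]
  have hm : (m.factorial : ℝ) ≠ 0 := Nat.cast_ne_zero.mpr m.factorial_ne_zero
  have hm1 : ((m:ℝ)+1) ≠ 0 := by positivity
  field_simp

lemma keyA (α β : ℝ) (k j : ℕ) :
    jacA (k+1+j) (α+1) (β+1) k * ((k:ℝ)+α+β+2) +
      jacA (k+1+j) (α+1) (β+1) (k+1) * ((k:ℝ)+α+2)
    = ((k:ℝ)+(j:ℝ)+2) * jacA (k+1+j+1) α β (k+1) := by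
  have h1 : (k+1+j) - k = j+1 := by omega
  have h2 : (k+1+j) - (k+1) = j := by omega
  have h3 : (k+1+j+1) - (k+1) = j+1 := by omega
  simp only [jacA, h1, h2, h3]
  push_cast
  rw [show ((α+1) + (k:ℝ) + 1) = α+k+2 by ring,
      show ((α+1) + ((k:ℝ)+1) + 1) = α+k+3 by ring,
      show (α + ((k:ℝ)+1) + 1) = α+k+2 by ring,
      show ((k:ℝ)+1+j + (α+1) + (β+1) + 1) = (k+j+α+β+3)+1 by ring,
      show ((k:ℝ)+1+j+1 + α + β + 1) = (k+j+α+β+3) by ring]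
  rw [poch_succ' (α+k+2 : ℝ) j, show ((α+(k:ℝ)+2)+1) = α+k+3 by ring,
      poch_succ ((k+j+α+β+3 : ℝ)+1) k,
      poch_succ' ((k+j+α+β+3 : ℝ)) k]
  rw [Nat.factorial_succ j, Nat.factorial_succ k]
  push_cast
  have hj : ((j.factorial : ℝ)) ≠ 0 := Nat.cast_ne_zero.mpr j.factorial_ne_zero
  have hk : ((k.factorial : ℝ)) ≠ 0 := Nat.cast_ne_zero.mpr k.factorial_ne_zero
  have hj1 : ((j:ℝ)+1) ≠ 0 := by positivity
  have hk1 : ((k:ℝ)+1) ≠ 0 := by positivity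
  field_simp
  ring

lemma keyA' (α β : ℝ) (m k : ℕ) (hk : k < m) :
    jacA m (α+1) (β+1) k * ((k:ℝ)+α+β+2) +
      jacA m (α+1) (β+1) (k+1) * ((k:ℝ)+α+2)
    = ((m:ℝ)+1) * jacA (m+1) α β (k+1) := by
  obtain ⟨j, rfl⟩ : ∃ j, m = k+1+j := ⟨m-k-1, by omega⟩
  have h := keyA α β k j
  push_cast
  linear_combination h

noncomputable def jacD (n : ℕ) (α β : ℝ) (x : ℝ) : ℝ :=
  ∑ k ∈ Finset.range (n+1), jacA n α β k * ((k:ℝ) * ((x-1)/2)^(k-1) * (1/2))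

lemma jacobiP_hasDerivAt (n : ℕ) (α β x : ℝ) :
    HasDerivAt (fun y => jacobiP n α β y) (jacD n α β x) x := by
  have h : ∀ k ∈ Finset.range (n+1),
      HasDerivAt (fun y : ℝ => jacA n α β k * ((y-1)/2)^k)
        (jacA n α β k * ((k:ℝ) * ((x-1)/2)^(k-1) * (1/2))) x := by
    intro k _
    exact ((((hasDerivAt_id x).sub_const 1).div_const 2).pow k).const_mul _
  have := HasDerivAt.fun_sum h
  simpa [jacobiP_eq, jacD] using this

lemma raise (m : ℕ) (α β x : ℝ) :
    (1 - x^2) * jacD m (α+1) (β+1) x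
      + (β - α - x*(α+β+2)) * jacobiP m (α+1) (β+1) x
    = -2*((m:ℝ)+1) * jacobiP (m+1) α β x := by
  have hterm : ∀ k : ℕ, (1-x^2) * ((k:ℝ) * ((x-1)/2)^(k-1) * (1/2))
      + (β-α-x*(α+β+2)) * ((x-1)/2)^k
      = (-2*((k:ℝ)+α+β+2)) * ((x-1)/2)^(k+1) + (-2*((k:ℝ)+α+1)) * ((x-1)/2)^k := by
    intro k
    cases k with
    | zero => norm_num; ring
    | succ j =>
      push_cast
      rw [pow_succ ((x-1)/2) (j+1), pow_succ ((x-1)/2) j]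
      ring
  set A := fun k => jacA m (α+1) (β+1) k with hA
  set B := fun k => jacA (m+1) α β k with hB
  have lhs_eq : (1 - x^2) * jacD m (α+1) (β+1) x
      + (β - α - x*(α+β+2)) * jacobiP m (α+1) (β+1) x
    = ∑ k ∈ Finset.range (m+1),
        (A k * ((-2*((k:ℝ)+α+β+2)) * ((x-1)/2)^(k+1)) +
         A k * ((-2*((k:ℝ)+α+1)) * ((x-1)/2)^k)) := by
    rw [jacD, jacobiP_eq, Finset.mul_sum, Finset.mul_sum, ← Finset.sum_add_distrib]
    refine Finset.sum_congr rfl fun k _ => ?_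
    have h := hterm k
    linear_combination (A k) * h
  rw [lhs_eq, Finset.sum_add_distrib]
  have rhs_eq : -2*((m:ℝ)+1) * jacobiP (m+1) α β x
      = ∑ k ∈ Finset.range (m+2), (-2*((m:ℝ)+1)) * (B k * ((x-1)/2)^k) := by
    rw [jacobiP_eq, Finset.mul_sum]
  rw [rhs_eq]
  rw [Finset.sum_range_succ (fun k => A k * ((-2*((k:ℝ)+α+β+2)) * ((x-1)/2)^(k+1))) m,
      Finset.sum_range_succ' (fun k => A k * ((-2*((k:ℝ)+α+1)) * ((x-1)/2)^k)) m,
      Finset.sum_range_succ (fun k => (-2*((m:ℝ)+1)) * (B k * ((x-1)/2)^k)) (m+1),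
      Finset.sum_range_succ' (fun k => (-2*((m:ℝ)+1)) * (B k * ((x-1)/2)^k)) m]
  have hmid : ∑ k ∈ Finset.range m, A k * ((-2*((k:ℝ)+α+β+2)) * ((x-1)/2)^(k+1))
      + ∑ k ∈ Finset.range m, A (k+1) * ((-2*(((k:ℝ)+1)+α+1)) * ((x-1)/2)^(k+1))
      = ∑ k ∈ Finset.range m, (-2*((m:ℝ)+1)) * (B (k+1) * ((x-1)/2)^(k+1)) := by
    rw [← Finset.sum_add_distrib]
    refine Finset.sum_congr rfl fun k hk => ?_
    have h := keyA' α β m k (Finset.mem_range.mp hk)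
    linear_combination (-2 * ((x-1)/2)^(k+1)) * h
  have htop : A m * ((-2*((m:ℝ)+α+β+2)) * ((x-1)/2)^(m+1))
      = (-2*((m:ℝ)+1)) * (B (m+1) * ((x-1)/2)^(m+1)) := by
    have h := keyC m α β
    linear_combination (-2 * ((x-1)/2)^(m+1)) * h
  have hbot : A 0 * ((-2*(((0:ℕ):ℝ)+α+1)) * ((x-1)/2)^(0:ℕ))
      = (-2*((m:ℝ)+1)) * (B 0 * ((x-1)/2)^(0:ℕ)) := by
    have h := keyB m α β
    push_cast
    linear_combination (-2) * h
  push_cast at hmid htop hbot ⊢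
  linarith [hmid, htop, hbot]

lemma cM (k j : ℕ) :
    (((k+1+j).factorial:ℝ)/(k.factorial:ℝ)) * (-2:ℝ)^(j+1)
      + (-2)*((j:ℝ)+1) * ((((k+1+j).factorial:ℝ)/((k+1).factorial:ℝ)) * (-2:ℝ)^j)
    = (((k+1+j+1).factorial:ℝ)/((k+1).factorial:ℝ)) * (-2:ℝ)^(j+1) := by
  rw [Nat.factorial_succ (k+1+j), Nat.factorial_succ k, pow_succ]
  have hk : ((k.factorial : ℝ)) ≠ 0 := Nat.cast_ne_zero.mpr k.factorial_ne_zero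
  have hk1 : ((k:ℝ)+1) ≠ 0 := by positivity
  push_cast
  field_simp
  ring

lemma hu (k : ℕ) (x : ℝ) :
    (1-x^2) * ((k:ℝ) * (1-x^2)^(k-1) * (-((2:ℕ) * x^1))) = (-2*(k:ℝ)*x) * (1-x^2)^k := by
  cases k with
  | zero => norm_num
  | succ j => rw [pow_succ]; push_cast; ring


/-- The raising operator `(R_{μ,σ} g)(x) = (1-x²) g'(x) + (σ-μ-x(μ+σ+2)) g(x)`. -/
noncomputable def jacR (μ σ : ℝ) (g : ℝ → ℝ) : ℝ → ℝ :=
  fun x => (1 - x ^ 2) * deriv g x + (σ - μ - x * (μ + σ + 2)) * g x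

/-- The composition `R_{α,β} R_{α+1,β+1} ⋯ R_{α+n-1,β+n-1}`
(the operator with largest parameters applied first). -/
noncomputable def jacRIter : ℝ → ℝ → ℕ → (ℝ → ℝ) → (ℝ → ℝ)
  | _, _, 0, f => f
  | α, β, n + 1, f => jacR α β (jacRIter (α + 1) (β + 1) n f)

theorem burchnall_jacobi_operational (α β : ℝ) (n : ℕ) (f : ℝ → ℝ) (hf : ContDiff ℝ (⊤ : ℕ∞) f)
    (x : ℝ) :
    jacRIter α β n f x =
      ∑ k ∈ Finset.range (n + 1),
        ((n.factorial : ℝ) / (k.factorial : ℝ)) * (-2 : ℝ) ^ (n - k) * iteratedDeriv k f x *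
          (1 - x ^ 2) ^ k * jacobiP (n - k) (α + k) (β + k) x := by
  induction n generalizing α β x with
  | zero =>
    simp [jacRIter, jacobiP_eq, jacA, poch_zero]
  | succ n ih =>
    have hfun : jacRIter (α+1) (β+1) n f = fun y =>
        ∑ k ∈ Finset.range (n + 1),
          ((n.factorial : ℝ) / (k.factorial : ℝ)) * (-2 : ℝ) ^ (n - k) * iteratedDeriv k f y *
            (1 - y ^ 2) ^ k * jacobiP (n - k) (α + 1 + k) (β + 1 + k) y :=
      funext fun y => ih (α+1) (β+1) y
    have hder : HasDerivAt (fun y =>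
        ∑ k ∈ Finset.range (n + 1),
          ((n.factorial : ℝ) / (k.factorial : ℝ)) * (-2 : ℝ) ^ (n - k) * iteratedDeriv k f y *
            (1 - y ^ 2) ^ k * jacobiP (n - k) (α + 1 + k) (β + 1 + k) y)
        (∑ k ∈ Finset.range (n + 1),
          (((n.factorial : ℝ) / (k.factorial : ℝ) * (-2 : ℝ) ^ (n - k) * iteratedDeriv (k+1) f x *
              (1 - x ^ 2) ^ k
            + (n.factorial : ℝ) / (k.factorial : ℝ) * (-2 : ℝ) ^ (n - k) * iteratedDeriv k f x *
              ((k:ℝ) * (1 - x ^ 2) ^ (k-1) * (-((2:ℕ) * x^1)))) *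
            jacobiP (n - k) (α + 1 + k) (β + 1 + k) x
          + (n.factorial : ℝ) / (k.factorial : ℝ) * (-2 : ℝ) ^ (n - k) * iteratedDeriv k f x *
            (1 - x ^ 2) ^ k * jacD (n - k) (α + 1 + k) (β + 1 + k) x)) x := by
      refine HasDerivAt.fun_sum fun k _ => ?_
      have h1 : HasDerivAt (iteratedDeriv k f) (iteratedDeriv (k+1) f x) x := by
        rw [iteratedDeriv_succ]
        exact ((hf.differentiable_iteratedDeriv k (by exact_mod_cast ENat.coe_lt_top k)).differentiableAt).hasDerivAt
      have h2 : HasDerivAt (fun y : ℝ => (1-y^2)^k)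
          ((k:ℝ) * (1 - x ^ 2) ^ (k-1) * (-((2:ℕ) * x^1))) x :=
        ((hasDerivAt_pow 2 x).const_sub 1).pow k
      have h3 := jacobiP_hasDerivAt (n-k) (α+1+k) (β+1+k) x
      have := ((h1.const_mul ((n.factorial : ℝ) / (k.factorial : ℝ) * (-2 : ℝ) ^ (n - k))).mul h2).mul h3
      exact this
    have hstep : jacRIter α β (n+1) f x = jacR α β (jacRIter (α+1) (β+1) n f) x := rfl
    rw [hstep, jacR, hfun, hder.deriv]
    beta_reduce
    rw [Finset.mul_sum, Finset.mul_sum, ← Finset.sum_add_distrib]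
    have hperm : ∀ k ∈ Finset.range (n+1),
        (1 - x ^ 2) * (((n.factorial : ℝ) / (k.factorial : ℝ) * (-2 : ℝ) ^ (n - k) * iteratedDeriv (k+1) f x * (1 - x ^ 2) ^ k
            + (n.factorial : ℝ) / (k.factorial : ℝ) * (-2 : ℝ) ^ (n - k) * iteratedDeriv k f x *
              ((k:ℝ) * (1 - x ^ 2) ^ (k-1) * (-((2:ℕ) * x^1)))) *
            jacobiP (n - k) (α + 1 + k) (β + 1 + k) x
          + (n.factorial : ℝ) / (k.factorial : ℝ) * (-2 : ℝ) ^ (n - k) * iteratedDeriv k f x *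
            (1 - x ^ 2) ^ k * jacD (n - k) (α + 1 + k) (β + 1 + k) x)
          + (β - α - x * (α + β + 2)) *
            ((n.factorial : ℝ) / (k.factorial : ℝ) * (-2 : ℝ) ^ (n - k) * iteratedDeriv k f x * (1 - x ^ 2) ^ k * jacobiP (n - k) (α + 1 + k) (β + 1 + k) x)
        = ((n.factorial : ℝ) / (k.factorial : ℝ) * (-2 : ℝ) ^ (n - k) * iteratedDeriv (k+1) f x * (1 - x ^ 2) ^ (k+1) * jacobiP (n - k) (α + (k:ℝ) + 1) (β + (k:ℝ) + 1) x)
          + (-2 * (((n - k : ℕ) : ℝ) + 1) * ((n.factorial : ℝ) / (k.factorial : ℝ) * (-2 : ℝ) ^ (n - k)) * iteratedDeriv k f x * (1 - x ^ 2) ^ k * jacobiP (n - k + 1) (α + (k:ℝ)) (β + (k:ℝ)) x) := by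
      intro k _
      rw [show (α + 1 + (k:ℝ)) = α + (k:ℝ) + 1 by ring,
          show (β + 1 + (k:ℝ)) = β + (k:ℝ) + 1 by ring,
          pow_succ (1 - x^2) k]
      have hr := raise (n-k) (α+(k:ℝ)) (β+(k:ℝ)) x
      have hh := hu k x
      linear_combination ((n.factorial : ℝ) / (k.factorial : ℝ) * (-2 : ℝ) ^ (n - k) * iteratedDeriv k f x * (1 - x ^ 2) ^ k) * hr
        + ((n.factorial : ℝ) / (k.factorial : ℝ) * (-2 : ℝ) ^ (n - k) * iteratedDeriv k f x * jacobiP (n - k) (α + (k:ℝ) + 1) (β + (k:ℝ) + 1) x) * hh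
    rw [Finset.sum_congr rfl hperm, Finset.sum_add_distrib]
    rw [Finset.sum_range_succ (fun k => (n.factorial : ℝ) / (k.factorial : ℝ) * (-2 : ℝ) ^ (n - k) * iteratedDeriv (k+1) f x * (1 - x ^ 2) ^ (k+1) * jacobiP (n - k) (α + (k:ℝ) + 1) (β + (k:ℝ) + 1) x) n,
        Finset.sum_range_succ' (fun k => -2 * (((n - k : ℕ) : ℝ) + 1) * ((n.factorial : ℝ) / (k.factorial : ℝ) * (-2 : ℝ) ^ (n - k)) * iteratedDeriv k f x * (1 - x ^ 2) ^ k * jacobiP (n - k + 1) (α + (k:ℝ)) (β + (k:ℝ)) x) n,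
        Finset.sum_range_succ (fun k => ((n+1).factorial : ℝ) / (k.factorial : ℝ) * (-2 : ℝ) ^ (n + 1 - k) * iteratedDeriv k f x * (1 - x ^ 2) ^ k * jacobiP (n + 1 - k) (α + k) (β + k) x) (n+1),
        Finset.sum_range_succ' (fun k => ((n+1).factorial : ℝ) / (k.factorial : ℝ) * (-2 : ℝ) ^ (n + 1 - k) * iteratedDeriv k f x * (1 - x ^ 2) ^ k * jacobiP (n + 1 - k) (α + k) (β + k) x) n]
    have hmid : ∀ k ∈ Finset.range n,
        ((n.factorial : ℝ) / (k.factorial : ℝ) * (-2 : ℝ) ^ (n - k) * iteratedDeriv (k+1) f x * (1 - x ^ 2) ^ (k+1) * jacobiP (n - k) (α + (k:ℝ) + 1) (β + (k:ℝ) + 1) x) + (-2 * (((n - (k+1) : ℕ) : ℝ) + 1) * ((n.factorial : ℝ) / ((k+1).factorial : ℝ) * (-2 : ℝ) ^ (n - (k+1))) * iteratedDeriv (k+1) f x * (1 - x ^ 2) ^ (k+1) * jacobiP (n - (k+1) + 1) (α + ((k+1 : ℕ):ℝ)) (β + ((k+1 : ℕ):ℝ)) x) = (((n+1).factorial : ℝ)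 / ((k+1).factorial : ℝ) * (-2 : ℝ) ^ (n + 1 - (k+1)) * iteratedDeriv (k+1) f x * (1 - x ^ 2) ^ (k+1) * jacobiP (n + 1 - (k+1)) (α + ((k+1 : ℕ):ℝ)) (β + ((k+1 : ℕ):ℝ)) x) := by
      intro k hk
      have hkn := Finset.mem_range.mp hk
      obtain ⟨j, rfl⟩ : ∃ j, n = k+1+j := ⟨n-k-1, by omega⟩
      rw [show k+1+j - k = j+1 from by omega, show k+1+j - (k+1) = j from by omega,
          show k+1+j+1 - (k+1) = j+1 from by omega,
          show k+1+j+1 = (k+1+j)+1 from rfl]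
      push_cast
      rw [show α + ((k:ℝ)+1) = α + (k:ℝ) + 1 by ring, show β + ((k:ℝ)+1) = β + (k:ℝ) + 1 by ring]
      have hc := cM k j
      linear_combination (iteratedDeriv (k+1) f x * (1 - x^2)^(k+1) *
        jacobiP (j+1) (α + (k:ℝ) + 1) (β + (k:ℝ) + 1) x) * hc
    have htop : ((n.factorial : ℝ) / (n.factorial : ℝ) * (-2 : ℝ) ^ (n - n) * iteratedDeriv (n+1) f x * (1 - x ^ 2) ^ (n+1) * jacobiP (n - n) (α + (n:ℝ) + 1) (β + (n:ℝ) + 1) x) = (((n+1).factorial : ℝ) / ((n+1).factorial : ℝ) * (-2 : ℝ) ^ (n + 1 - (n+1)) * iteratedDeriv (n+1) f x * (1 - x ^ 2) ^ (n+1) * jacobiP (n + 1 - (n+1)) (α + ((n+1 : ℕ):ℝ)) (β + ((n+1 : ℕ):ℝ)) x) := by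
      have h1 : ((n.factorial : ℝ)) ≠ 0 := Nat.cast_ne_zero.mpr n.factorial_ne_zero
      have h2 : (((n+1).factorial : ℝ)) ≠ 0 := Nat.cast_ne_zero.mpr (n+1).factorial_ne_zero
      simp only [Nat.sub_self, pow_zero]
      push_cast
      rw [show α + ((n:ℝ)+1) = α + (n:ℝ) + 1 by ring, show β + ((n:ℝ)+1) = β + (n:ℝ) + 1 by ring,
          div_self h1, div_self h2]
    have hbot : (-2 * (((n - 0 : ℕ) : ℝ) + 1) * ((n.factorial : ℝ) / ((0:ℕ).factorial : ℝ) * (-2 : ℝ) ^ (n - 0)) * iteratedDeriv 0 f x * (1 - x ^ 2) ^ (0:ℕ) * jacobiP (n - 0 + 1) (α + ((0:ℕ):ℝ)) (β + ((0:ℕ):ℝ)) x) = (((n+1).factorial : ℝ) / ((0:ℕ).factorial : ℝ) * (-2 : ℝ) ^ (n + 1 - 0) * iteratedDeriv 0 f x * (1 - x ^ 2) ^ (0:ℕ) * jacobiP (n + 1 - 0) (α + ((0:ℕ):ℝ)) (β + ((0:ℕ):ℝ)) x) := by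
      simp only [Nat.sub_zero, Nat.factorial_zero]
      rw [pow_succ, Nat.factorial_succ n]
      push_cast
      ring
    have hsum : (∑ k ∈ Finset.range n, ((n.factorial : ℝ) / (k.factorial : ℝ) * (-2 : ℝ) ^ (n - k) * iteratedDeriv (k+1) f x * (1 - x ^ 2) ^ (k+1) * jacobiP (n - k) (α + (k:ℝ) + 1) (β + (k:ℝ) + 1) x))
        + (∑ k ∈ Finset.range n, (-2 * (((n - (k+1) : ℕ) : ℝ) + 1) * ((n.factorial : ℝ) / ((k+1).factorial : ℝ) * (-2 : ℝ) ^ (n - (k+1))) * iteratedDeriv (k+1) f x * (1 - x ^ 2) ^ (k+1) * jacobiP (n - (k+1) + 1) (α + ((k+1 : ℕ):ℝ)) (β + ((k+1 : ℕ):ℝ)) x))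
        = ∑ k ∈ Finset.range n, (((n+1).factorial : ℝ) / ((k+1).factorial : ℝ) * (-2 : ℝ) ^ (n + 1 - (k+1)) * iteratedDeriv (k+1) f x * (1 - x ^ 2) ^ (k+1) * jacobiP (n + 1 - (k+1)) (α + ((k+1 : ℕ):ℝ)) (β + ((k+1 : ℕ):ℝ)) x) := by
      rw [← Finset.sum_add_distrib]
      exact Finset.sum_congr rfl hmid
    linarith [hsum, htop, hbot]
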